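/- arXiv:2501.11976 — 4 statements merged into one kernel-verified Lean document; each statement's English description precedes it below -/
import Mathlib

section
/- For all real u, v, the points (x,y,z) given by x = -2(u² + 2u³v - v² + u⁴v²), y = -2(u + v + 3u²v + 2uv² + 2u³v²), z = 1 + 4uv + 4u³v + 2v² + 2u⁴v² + u²(2 + 4v²), satisfy x² + y² - z² = -1; moreover z ≥ 1 for all real u, v, so the image lies in the upper sheet of the two-sheeted hyperboloid. -/
theorem two_sheeted_hyperboloid_upper_sheet_parametrization (u v : ℝ) :
    (-2 * (u ^ 2 + 2 * u ^ 3 * v - v ^ 2 + u ^ 4 * v ^ 2)) ^ 2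
      + (-2 * (u + v + 3 * u ^ 2 * v + 2 * u * v ^ 2 + 2 * u ^ 3 * v ^ 2)) ^ 2
      - (1 + 4 * u * v + 4 * u ^ 3 * v + 2 * v ^ 2 + 2 * u ^ 4 * v ^ 2
          + u ^ 2 * (2 + 4 * v ^ 2)) ^ 2 = -1
    ∧ 1 ≤ 1 + 4 * u * v + 4 * u ^ 3 * v + 2 * v ^ 2 + 2 * u ^ 4 * v ^ 2
          + u ^ 2 * (2 + 4 * v ^ 2) := by
  constructor
  · ring
  · nlinarith [sq_nonneg (u + v + u ^ 2 * v), sq_nonneg u]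
end

section
/- For all real u, v, the point (x, y, z) with x = (1/2)u³(v³ - 2√3·v² + 4v - √3) - u²/2 + 1, y = (1/2)u³(√3·v³ - 4v² + 2√3·v - 1) + (1/2)u²(2√3·v² - 4v + √3) + u, z = u²(v² - √3·v + 1) + uv, satisfies x² + y² - z³ - 1 = 0. -/
theorem cubic_surface_of_revolution_real_parametrization (u v : ℝ) :
    ((1 / 2) * u ^ 3 * (v ^ 3 - 2 * Real.sqrt 3 * v ^ 2 + 4 * v - Real.sqrt 3)
        - u ^ 2 / 2 + 1) ^ 2
      + ((1 / 2) * u ^ 3 * (Real.sqrt 3 * v ^ 3 - 4 * v ^ 2 + 2 * Real.sqrt 3 * v - 1)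
        + (1 / 2) * u ^ 2 * (2 * Real.sqrt 3 * v ^ 2 - 4 * v + Real.sqrt 3) + u) ^ 2
      - (u ^ 2 * (v ^ 2 - Real.sqrt 3 * v + 1) + u * v) ^ 3 - 1 = 0 := by
  have h : Real.sqrt 3 ^ 2 = 3 := Real.sq_sqrt (by norm_num)
  linear_combination ((1/4) * u ^ 4 + u ^ 4 * v ^ 2 + u ^ 4 * v ^ 4 + u ^ 5 * v
    - (1/2) * u ^ 5 * v ^ 3 + u ^ 5 * v ^ 5 + (1/4) * u ^ 6 - u ^ 6 * v ^ 2
    + u ^ 6 * v ^ 3 * Real.sqrt 3 - u ^ 6 * v ^ 4 + (1/4) * u ^ 6 * v ^ 6) * h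
end

section
/- If f, g, h ∈ ℝ[u,v] satisfy f² + g² + h² = 1 as polynomials, then f, g, h are each constant polynomials. -/
open Polynomial

/-- Key degree lemma: coeff of `p^2` at `2n` when `natDegree p ≤ n`. -/
lemma coeff_sq_two_n {A : Type*} [CommRing A] (p : A[X]) (n : ℕ)
    (hp : p.natDegree ≤ n) : (p ^ 2).coeff (2 * n) = (p.coeff n) ^ 2 := by
  rcases lt_or_eq_of_le hp with hlt | heq
  · have h1 : (p ^ 2).natDegree < 2 * n := by
      calc (p ^ 2).natDegree ≤ 2 * p.natDegree := Polynomial.natDegree_pow_le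
        _ < 2 * n := by omega
    rw [Polynomial.coeff_eq_zero_of_natDegree_lt h1,
        Polynomial.coeff_eq_zero_of_natDegree_lt hlt]
    ring
  · have := Polynomial.coeff_mul_degree_add_degree p p
    rw [sq, sq]
    rw [heq] at this
    simpa [Polynomial.leadingCoeff, heq, two_mul] using this

/-- If sums of three squares vanish only trivially in `A`, then a sum of three
squares of polynomials equal to `1` forces all to be constant. -/
lemma poly_const_of_sq_sum_one {A : Type*} [CommRing A]
    (hP : ∀ a b c : A, a ^ 2 + b ^ 2 + c ^ 2 = 0 → a = 0 ∧ b = 0 ∧ c = 0)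
    (p q r : A[X]) (hsum : p ^ 2 + q ^ 2 + r ^ 2 = 1) :
    (∃ a, p = C a) ∧ (∃ a, q = C a) ∧ (∃ a, r = C a) := by
  set n := max (max p.natDegree q.natDegree) r.natDegree with hn
  have hpn : p.natDegree ≤ n := le_max_of_le_left (le_max_left _ _)
  have hqn : q.natDegree ≤ n := le_max_of_le_left (le_max_right _ _)
  have hrn : r.natDegree ≤ n := le_max_right _ _
  have hn0 : n = 0 := by
    by_contra hne
    have h2n : (2 * n) ≠ 0 := by omega
    have hc : (p ^ 2 + q ^ 2 + r ^ 2).coeff (2 * n) =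
        (p.coeff n) ^ 2 + (q.coeff n) ^ 2 + (r.coeff n) ^ 2 := by
      simp [coeff_sq_two_n p n hpn, coeff_sq_two_n q n hqn, coeff_sq_two_n r n hrn]
    rw [hsum, Polynomial.coeff_one, if_neg h2n] at hc
    obtain ⟨hp0, hq0, hr0⟩ := hP _ _ _ hc.symm
    -- one of the natDegrees equals n
    have : p.natDegree = n ∨ q.natDegree = n ∨ r.natDegree = n := by omega
    rcases this with hd | hd | hd
    · have : p ≠ 0 := fun h => by simp [h] at hd; omega
      exact (Polynomial.leadingCoeff_ne_zero.mpr this) (by rwa [Polynomial.leadingCoeff, hd])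
    · have : q ≠ 0 := fun h => by simp [h] at hd; omega
      exact (Polynomial.leadingCoeff_ne_zero.mpr this) (by rwa [Polynomial.leadingCoeff, hd])
    · have : r ≠ 0 := fun h => by simp [h] at hd; omega
      exact (Polynomial.leadingCoeff_ne_zero.mpr this) (by rwa [Polynomial.leadingCoeff, hd])
  refine ⟨?_, ?_, ?_⟩
  · exact (Polynomial.natDegree_eq_zero.mp (by omega)).imp fun a ha => ha.symm
  · exact (Polynomial.natDegree_eq_zero.mp (by omega)).imp fun a ha => ha.symm
  · exact (Polynomial.natDegree_eq_zero.mp (by omega)).imp fun a ha => ha.symm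

lemma real_hP : ∀ a b c : ℝ, a ^ 2 + b ^ 2 + c ^ 2 = 0 → a = 0 ∧ b = 0 ∧ c = 0 := by
  intro a b c habc
  refine ⟨?_, ?_, ?_⟩ <;> nlinarith [sq_nonneg a, sq_nonneg b, sq_nonneg c]

lemma polyR_hP : ∀ a b c : ℝ[X], a ^ 2 + b ^ 2 + c ^ 2 = 0 → a = 0 ∧ b = 0 ∧ c = 0 := by
  intro a b c habc
  have key : ∀ x : ℝ, a.eval x = 0 ∧ b.eval x = 0 ∧ c.eval x = 0 := by
    intro x
    have := congrArg (Polynomial.eval x) habc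
    simp at this
    exact real_hP _ _ _ this
  refine ⟨?_, ?_, ?_⟩ <;>
    exact Polynomial.funext fun x => by simp [(key x).1, (key x).2.1, (key x).2.2]

noncomputable def E : MvPolynomial (Fin 2) ℝ ≃ₐ[ℝ] Polynomial (Polynomial ℝ) :=
  (MvPolynomial.finSuccEquiv ℝ 1).trans <| Polynomial.mapAlgEquiv <|
    (MvPolynomial.finSuccEquiv ℝ 0).trans <| Polynomial.mapAlgEquiv <|
      MvPolynomial.isEmptyAlgEquiv ℝ (Fin 0)

theorem sum_of_squares_one_forces_constant
    (f g h : MvPolynomial (Fin 2) ℝ)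
    (hsum : f ^ 2 + g ^ 2 + h ^ 2 = 1) :
    (∃ c : ℝ, f = MvPolynomial.C c) ∧ (∃ c : ℝ, g = MvPolynomial.C c)
      ∧ (∃ c : ℝ, h = MvPolynomial.C c) := by
  have hsum' : E f ^ 2 + E g ^ 2 + E h ^ 2 = 1 := by
    have := congrArg E hsum
    simpa using this
  obtain ⟨⟨a, ha⟩, ⟨b, hb⟩, ⟨c, hc⟩⟩ := poly_const_of_sq_sum_one polyR_hP _ _ _ hsum'
  rw [ha, hb, hc] at hsum'
  have hsum'' : a ^ 2 + b ^ 2 + c ^ 2 = 1 := by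
    apply_fun Polynomial.C using Polynomial.C_injective
    simpa using hsum'
  obtain ⟨⟨a0, ha0⟩, ⟨b0, hb0⟩, ⟨c0, hc0⟩⟩ := poly_const_of_sq_sum_one real_hP _ _ _ hsum''
  have key : ∀ (p : MvPolynomial (Fin 2) ℝ) (x : ℝ), E p = C (C x) →
      p = MvPolynomial.C x := by
    intro p x hx
    have h1 : C (C x) = algebraMap ℝ (Polynomial (Polynomial ℝ)) x := by
      simp [Polynomial.algebraMap_apply]
    have := congrArg E.symm hx
    rw [AlgEquiv.symm_apply_apply, h1] at this
    rw [this, ← MvPolynomial.algebraMap_eq]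
    exact E.symm.commutes x
  exact ⟨⟨a0, key f a0 (by rw [ha, ha0])⟩, ⟨b0, key g b0 (by rw [hb, hb0])⟩,
    ⟨c0, key h c0 (by rw [hc, hc0])⟩⟩
end

section
/- For all real u, v and real λ > 0, and any real polynomials a, b, the point (x,y,z) with x = √λ·a(√λ(u(uv+1)+v))·(v - u(uv+1)), y = √λ·a(√λ(u(uv+1)+v))·(2uv+1), z = b(√λ(u(uv+1)+v)) satisfies: there exists t ∈ ℝ (namely t = √λ(u(uv+1)+v)) with x² + y² = (t² + λ)·a(t)² and z = b(t). -/
theorem sor_param_delta_two_one_sheeted (lam : ℝ) (hlam : 0 < lam)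
    (a b : Polynomial ℝ) (u v : ℝ) :
    ∃ t : ℝ,
      (Real.sqrt lam * Polynomial.eval (Real.sqrt lam * (u * (u * v + 1) + v)) a
          * (v - u * (u * v + 1))) ^ 2
        + (Real.sqrt lam * Polynomial.eval (Real.sqrt lam * (u * (u * v + 1) + v)) a
          * (2 * u * v + 1)) ^ 2
      = (t ^ 2 + lam) * (Polynomial.eval t a) ^ 2
      ∧ Polynomial.eval (Real.sqrt lam * (u * (u * v + 1) + v)) b = Polynomial.eval t b := by
  refine ⟨Real.sqrt lam * (u * (u * v + 1) + v), ?_, rfl⟩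
  have h : Real.sqrt lam ^ 2 = lam := Real.sq_sqrt hlam.le
  ring_nf
  nlinarith [sq_nonneg (Polynomial.eval (Real.sqrt lam * (u * (u * v + 1) + v)) a)]
end
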